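/- arXiv:quant-ph/0009090 — 2 statements merged into one kernel-verified Lean document; each statement's English description precedes it below -/
import Mathlib

section
/- Suppose in addition |v_j| < 1 for every j, and let |v_{j₀}| = max_j |v_j|. For every real λ with 0 ≤ λ < (1 − |v_{j₀}|²)·N/(N−1), the decohered state (1−λ)E_ψ + (λ/N)·I is entangled, where I is the N×N identity matrix. -/
/-!
`E_ψ` itself is an entanglement witness. On the decohered state it takes the value
`⟨E_ψ, ρ⟩ = 1 - λ + λ/N`. For a pure product state `P = A₁ ⊗ ⋯ ⊗ A_p`, only the entries of `P` at
the multi-indices `(j, …, j)` meet `E_ψ`, and each factor satisfies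
`|(A_α)_{jk}| ≤ √(A_α)_{jj} √(A_α)_{kk}`. Bounding all factors but the first two by `1` and
applying Cauchy–Schwarz in `j` to those two gives `|⟨E_ψ, P⟩| ≤ max_j |v_j|²`, and by convexity
the same bound holds on every separable state. The hypothesis on `λ` is exactly
`1 - λ + λ/N > |v_{j₀}|²`.
-/

open Matrix BigOperators ComplexOrder

noncomputable section

/-- The Frobenius inner product `⟨A, B⟩ = Tr(Aᴴ B)`. -/
def frobInner {m : Type*} [Fintype m] (A B : Matrix m m ℂ) : ℂ :=
  (Aᴴ * B).trace

/-- The Frobenius norm associated to the Frobenius inner product. -/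
def frobNorm {m : Type*} [Fintype m] (A : Matrix m m ℂ) : ℝ :=
  Real.sqrt (frobInner A A).re

/-- A state (density matrix): a positive semidefinite (Hermitian) matrix of trace one. -/
def IsState {m : Type*} [Fintype m] (M : Matrix m m ℂ) : Prop :=
  M.PosSemidef ∧ M.trace = 1

/-- A pure state: a rank-one orthogonal projection, i.e. a Hermitian idempotent of trace one. -/
def IsPureState {m : Type*} [Fintype m] (M : Matrix m m ℂ) : Prop :=
  M.IsHermitian ∧ M * M = M ∧ M.trace = 1

/-- The Kronecker product of the matrices `A α`, realized on the tuple basis of the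
tensor product `ℂ^{n 0} ⊗ ⋯ ⊗ ℂ^{n (p-1)} ≃ ℂ^N`, `N = ∏ α, n α`. -/
def prodMat {p : ℕ} {n : Fin p → ℕ} (A : ∀ α, Matrix (Fin (n α)) (Fin (n α)) ℂ) :
    Matrix (∀ α, Fin (n α)) (∀ α, Fin (n α)) ℂ :=
  fun j k => ∏ α, A α (j α) (k α)

/-- A pure product state: a Kronecker product of pure states on the factors. -/
def IsPureProductState {p : ℕ} {n : Fin p → ℕ}
    (M : Matrix (∀ α, Fin (n α)) (∀ α, Fin (n α)) ℂ) : Prop :=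
  ∃ A : ∀ α, Matrix (Fin (n α)) (Fin (n α)) ℂ,
    (∀ α, IsPureState (A α)) ∧ M = prodMat A

/-- A (fully) separable state: a finite convex combination of pure product states. -/
def IsSeparableState {p : ℕ} {n : Fin p → ℕ}
    (M : Matrix (∀ α, Fin (n α)) (∀ α, Fin (n α)) ℂ) : Prop :=
  ∃ (k : ℕ) (c : Fin k → ℝ) (P : Fin k → Matrix (∀ α, Fin (n α)) (∀ α, Fin (n α)) ℂ),
    (∀ i, 0 ≤ c i) ∧ (∑ i, c i) = 1 ∧ (∀ i, IsPureProductState (P i)) ∧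
      M = ∑ i, (c i : ℂ) • P i

/-- The vector `ψ = ∑ j, v j • (e j ⊗ ⋯ ⊗ e j)`, where `e j` is the `j`-th standard basis
vector of each factor (embedded via `n 0 ≤ n α`). -/
def psiVec {p : ℕ} {n : Fin (p + 2) → ℕ} (hn : Monotone n) (v : Fin (n 0) → ℂ) :
    (∀ α, Fin (n α)) → ℂ :=
  fun x => ∑ j : Fin (n 0), v j *
    ∏ α, (if x α = Fin.castLE (hn (Fin.zero_le α)) j then (1 : ℂ) else 0)

/-- The pure state `E_ψ = |ψ⟩⟨ψ|`. -/
def Epsi {p : ℕ} {n : Fin (p + 2) → ℕ} (hn : Monotone n) (v : Fin (n 0) → ℂ) :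
    Matrix (∀ α, Fin (n α)) (∀ α, Fin (n α)) ℂ :=
  fun x y => psiVec hn v x * star (psiVec hn v y)

section FrobInner

variable {m : Type*} [Fintype m] (A : Matrix m m ℂ)

theorem frobInner_add_right (B C : Matrix m m ℂ) :
    frobInner A (B + C) = frobInner A B + frobInner A C := by
  rw [frobInner, Matrix.mul_add, trace_add, frobInner, frobInner]

theorem frobInner_smul_right (c : ℂ) (B : Matrix m m ℂ) :
    frobInner A (c • B) = c * frobInner A B := by
  rw [frobInner, Matrix.mul_smul, trace_smul, smul_eq_mul, frobInner]

theorem frobInner_sum_right {ι : Type*} (s : Finset ι) (B : ι → Matrix m m ℂ) :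
    frobInner A (∑ i ∈ s, B i) = ∑ i ∈ s, frobInner A (B i) := by
  rw [frobInner, Matrix.mul_sum, trace_sum]
  rfl

end FrobInner

namespace IsPureState

variable {m : Type*} [Fintype m] {A : Matrix m m ℂ}

theorem conjTranspose_mul_self (hA : IsPureState A) : Aᴴ * A = A := by
  rw [hA.1.eq, hA.2.1]

theorem re_apply_self (hA : IsPureState A) (j : m) : (A j j).re = ∑ i, ‖A i j‖ ^ 2 := by
  conv_lhs => rw [← hA.conjTranspose_mul_self]
  simp [Matrix.mul_apply, Complex.conj_mul', ← Complex.ofReal_pow]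

theorem re_apply_self_nonneg (hA : IsPureState A) (j : m) : 0 ≤ (A j j).re := by
  rw [hA.re_apply_self]
  positivity

theorem sum_re_apply_self_comp_le_one (hA : IsPureState A) {ι : Type*} [Fintype ι] {e : ι → m}
    (he : Function.Injective e) : ∑ j, (A (e j) (e j)).re ≤ 1 := by
  have htrace : ∑ j, (A j j).re = 1 := by
    simpa [Matrix.trace, Complex.re_sum] using congrArg Complex.re hA.2.2
  calc ∑ j, (A (e j) (e j)).re = ∑ i ∈ Finset.univ.map ⟨e, he⟩, (A i i).re :=
        by rw [Finset.sum_map]; rfl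
    _ ≤ 1 := htrace ▸ Finset.sum_le_sum_of_subset_of_nonneg (Finset.subset_univ _)
        fun i _ _ => hA.re_apply_self_nonneg i

theorem re_apply_self_le_one (hA : IsPureState A) (j : m) : (A j j).re ≤ 1 := by
  simpa using
    hA.sum_re_apply_self_comp_le_one (Function.injective_of_subsingleton fun _ : Unit => j)

/-- Cauchy–Schwarz for the columns of `A = Aᴴ A`. -/
theorem norm_apply_le (hA : IsPureState A) (j k : m) :
    ‖A j k‖ ≤ √(A j j).re * √(A k k).re := by
  rw [hA.re_apply_self, hA.re_apply_self]
  conv_lhs => rw [← hA.conjTranspose_mul_self]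
  calc ‖(Aᴴ * A) j k‖ ≤ ∑ i, ‖A i j‖ * ‖A i k‖ := by
        simpa [Matrix.mul_apply] using norm_sum_le _ fun i => star (A i j) * A i k
    _ ≤ _ := Real.sum_mul_le_sqrt_mul_sqrt _ _ _

end IsPureState

theorem norm_prodMat_apply_le {p : ℕ} {n : Fin p → ℕ} {A : ∀ α, Matrix (Fin (n α)) (Fin (n α)) ℂ}
    (hA : ∀ α, IsPureState (A α)) (x y : ∀ α, Fin (n α)) :
    ‖prodMat A x y‖ ≤ (∏ α, √(A α (x α) (x α)).re) * ∏ α, √(A α (y α) (y α)).re := by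
  rw [prodMat, norm_prod, ← Finset.prod_mul_distrib]
  exact Finset.prod_le_prod (fun α _ => norm_nonneg _) fun α _ => (hA α).norm_apply_le _ _

theorem norm_sum_sum_star_mul_mul_le {ι : Type*} [Fintype ι] (v : ι → ℂ) (M : Matrix ι ι ℂ)
    (d : ι → ℝ) (hM : ∀ j k, ‖M j k‖ ≤ d j * d k) :
    ‖∑ j, ∑ k, star (v j) * v k * M j k‖ ≤ (∑ j, ‖v j‖ * d j) ^ 2 := by
  calc ‖∑ j, ∑ k, star (v j) * v k * M j k‖
      ≤ ∑ j, ∑ k, ‖star (v j) * v k * M j k‖ :=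
        (norm_sum_le _ _).trans (Finset.sum_le_sum fun j _ => norm_sum_le _ _)
    _ ≤ ∑ j, ∑ k, (‖v j‖ * d j) * (‖v k‖ * d k) := by
        gcongr with j _ k _
        rw [norm_mul, norm_mul, norm_star, mul_mul_mul_comm]
        exact mul_le_mul_of_nonneg_left (hM j k) (by positivity)
    _ = (∑ j, ‖v j‖ * d j) ^ 2 := by rw [sq, Finset.sum_mul_sum]

theorem sum_mul_mul_le_of_sum_sq_le_one {ι : Type*} [Fintype ι] {w a b : ι → ℝ} {c : ℝ}
    (hc : 0 ≤ c) (hw : ∀ j, w j ≤ c) (ha : ∀ j, 0 ≤ a j) (hb : ∀ j, 0 ≤ b j)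
    (ha1 : ∑ j, a j ^ 2 ≤ 1) (hb1 : ∑ j, b j ^ 2 ≤ 1) :
    ∑ j, w j * (a j * b j) ≤ c := by
  have hab : ∑ j, a j * b j ≤ 1 :=
    (Real.sum_mul_le_sqrt_mul_sqrt _ _ _).trans <|
      mul_le_one₀ (Real.sqrt_le_one.mpr ha1) (Real.sqrt_nonneg _) (Real.sqrt_le_one.mpr hb1)
  calc ∑ j, w j * (a j * b j) ≤ ∑ j, c * (a j * b j) :=
        Finset.sum_le_sum fun j _ => mul_le_mul_of_nonneg_right (hw j) (mul_nonneg (ha j) (hb j))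
    _ = c * ∑ j, a j * b j := by rw [Finset.mul_sum]
    _ ≤ c := mul_le_of_le_one_right hc hab

theorem Fin.prod_le_mul_of_le_one {p : ℕ} {f : Fin (p + 2) → ℝ} (h0 : ∀ α, 0 ≤ f α)
    (h1 : ∀ α, f α ≤ 1) : ∏ α, f α ≤ f 0 * f 1 := by
  rw [Fin.prod_univ_succ, Fin.prod_univ_succ, ← mul_assoc]
  exact mul_le_of_le_one_right (mul_nonneg (h0 0) (h0 1))
    (Finset.prod_le_one (fun α _ => h0 _) fun α _ => h1 _)

section Psi

variable {p : ℕ} {n : Fin (p + 2) → ℕ}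

def diagIndex (hn : Monotone n) (j : Fin (n 0)) : ∀ α, Fin (n α) :=
  fun α => Fin.castLE (hn (Fin.zero_le α)) j

theorem diagIndex_injective (hn : Monotone n) : Function.Injective (diagIndex hn) :=
  fun _ _ h => Fin.castLE_injective _ (congrFun h 0)

theorem psiVec_eq_sum_single (hn : Monotone n) (v : Fin (n 0) → ℂ) :
    psiVec hn v = ∑ j, Pi.single (diagIndex hn j) (v j) := by
  ext x
  simp only [psiVec, Fintype.prod_boole, ← funext_iff, Finset.sum_apply, Pi.single_apply,
    mul_ite, mul_one, mul_zero]
  rfl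

theorem frobInner_Epsi (hn : Monotone n) (v : Fin (n 0) → ℂ)
    (M : Matrix (∀ α, Fin (n α)) (∀ α, Fin (n α)) ℂ) :
    frobInner (Epsi hn v) M =
      ∑ j, ∑ k, star (v j) * v k * M (diagIndex hn j) (diagIndex hn k) := by
  have hE : Epsi hn v = vecMulVec (psiVec hn v) (star (psiVec hn v)) := rfl
  rw [frobInner, hE, conjTranspose_vecMulVec, star_star, vecMulVec_mul, trace_vecMulVec,
    psiVec_eq_sum_single, star_sum]
  simp only [sum_vecMul, sum_dotProduct, dotProduct_sum, Pi.star_single, single_vecMul,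
    single_dotProduct, Matrix.row, Pi.smul_apply, smul_eq_mul]
  exact Finset.sum_congr rfl fun j _ => Finset.sum_congr rfl fun k _ => by ring

theorem psiVec_diagIndex (hn : Monotone n) (v : Fin (n 0) → ℂ) (j : Fin (n 0)) :
    psiVec hn v (diagIndex hn j) = v j := by
  simp [psiVec_eq_sum_single, Pi.single_apply, (diagIndex_injective hn).eq_iff]

theorem frobInner_Epsi_self (hn : Monotone n) {v : Fin (n 0) → ℂ} (hv : ∑ j, ‖v j‖ ^ 2 = 1) :
    frobInner (Epsi hn v) (Epsi hn v) = 1 := by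
  have hv' : ∑ j, star (v j) * v j = 1 := by
    simp [Complex.conj_mul', ← Complex.ofReal_pow, ← Complex.ofReal_sum, hv]
  simp_rw [frobInner_Epsi, Epsi, psiVec_diagIndex]
  calc ∑ j, ∑ k, star (v j) * v k * (v j * star (v k))
      = (∑ j, star (v j) * v j) * ∑ k, star (v k) * v k := by
        rw [Finset.sum_mul_sum]
        exact Finset.sum_congr rfl fun j _ => Finset.sum_congr rfl fun k _ => by ring
    _ = 1 := by rw [hv', one_mul]

theorem frobInner_Epsi_one (hn : Monotone n) {v : Fin (n 0) → ℂ} (hv : ∑ j, ‖v j‖ ^ 2 = 1) :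
    frobInner (Epsi hn v) 1 = 1 := by
  simp [frobInner_Epsi, Matrix.one_apply, (diagIndex_injective hn).eq_iff, Complex.conj_mul',
    ← Complex.ofReal_pow, ← Complex.ofReal_sum, hv]

theorem norm_frobInner_Epsi_prodMat_le (hn : Monotone n) {v : Fin (n 0) → ℂ} {j₀ : Fin (n 0)}
    (hj₀ : ∀ j, ‖v j‖ ≤ ‖v j₀‖) {A : ∀ α, Matrix (Fin (n α)) (Fin (n α)) ℂ}
    (hA : ∀ α, IsPureState (A α)) :
    ‖frobInner (Epsi hn v) (prodMat A)‖ ≤ ‖v j₀‖ ^ 2 := by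
  set t : Fin (p + 2) → Fin (n 0) → ℝ :=
    fun α j => √(A α (diagIndex hn j α) (diagIndex hn j α)).re
  have ht0 : ∀ α j, 0 ≤ t α j := fun α j => Real.sqrt_nonneg _
  have ht1 : ∀ α j, t α j ≤ 1 := fun α j => Real.sqrt_le_one.mpr ((hA α).re_apply_self_le_one _)
  have htsq : ∀ α, ∑ j, t α j ^ 2 ≤ 1 := fun α => by
    simpa only [t, diagIndex, Real.sq_sqrt ((hA α).re_apply_self_nonneg _)] using
      (hA α).sum_re_apply_self_comp_le_one (Fin.castLE_injective (hn (Fin.zero_le α)))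
  have hsum : ∑ j, ‖v j‖ * ∏ α, t α j ≤ ‖v j₀‖ :=
    calc ∑ j, ‖v j‖ * ∏ α, t α j ≤ ∑ j, ‖v j‖ * (t 0 j * t 1 j) := by
          gcongr with j
          exact Fin.prod_le_mul_of_le_one (fun α => ht0 α j) fun α => ht1 α j
      _ ≤ ‖v j₀‖ := sum_mul_mul_le_of_sum_sq_le_one (norm_nonneg _) hj₀ (ht0 0) (ht0 1)
          (htsq 0) (htsq 1)
  rw [frobInner_Epsi]
  calc _ ≤ (∑ j, ‖v j‖ * ∏ α, t α j) ^ 2 :=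
        norm_sum_sum_star_mul_mul_le _ _ _ fun j k => norm_prodMat_apply_le hA _ _
    _ ≤ ‖v j₀‖ ^ 2 := by gcongr

end Psi

theorem IsSeparableState.re_frobInner_le {p : ℕ} {n : Fin p → ℕ}
    {σ E : Matrix (∀ α, Fin (n α)) (∀ α, Fin (n α)) ℂ} (hσ : IsSeparableState σ) {b : ℝ}
    (hb : ∀ A : ∀ α, Matrix (Fin (n α)) (Fin (n α)) ℂ, (∀ α, IsPureState (A α)) →
      (frobInner E (prodMat A)).re ≤ b) :
    (frobInner E σ).re ≤ b := by
  obtain ⟨k, c, P, hc0, hc1, hP, rfl⟩ := hσ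
  simp only [frobInner_sum_right, frobInner_smul_right, Complex.re_sum, Complex.re_ofReal_mul]
  calc ∑ i, c i * (frobInner E (P i)).re ≤ ∑ i, c i * b := by
        gcongr with i
        · exact hc0 i
        obtain ⟨A, hA, hPA⟩ := hP i
        exact hPA ▸ hb A hA
    _ = b := by rw [← Finset.sum_mul, hc1, one_mul]

theorem decohered_Epsi_entangled_general {p : ℕ} {n : Fin (p + 2) → ℕ}
    (hn : Monotone n) (hn₁ : 2 ≤ n 0)
    (v : Fin (n 0) → ℂ) (hv : ∑ j, ‖v j‖ ^ 2 = 1)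
    (j₀ : Fin (n 0)) (hj₀ : ∀ j, ‖v j‖ ≤ ‖v j₀‖)
    (lam : ℝ)
    (hlam1 : lam < (1 - ‖v j₀‖ ^ 2) * ((∏ α, n α : ℕ) : ℝ) / (((∏ α, n α : ℕ) : ℝ) - 1)) :
    ¬ IsSeparableState (((1 - lam : ℝ) : ℂ) • Epsi hn v +
      ((lam / ((∏ α, n α : ℕ) : ℝ) : ℝ) : ℂ) •
        (1 : Matrix (∀ α, Fin (n α)) (∀ α, Fin (n α)) ℂ)) := by
  intro hsep
  have hN : (2 : ℝ) ≤ ((∏ α, n α : ℕ) : ℝ) := by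
    have : n 0 ≤ ∏ α, n α := Finset.single_le_prod'
      (fun α _ => (one_le_two.trans hn₁).trans (hn (Fin.zero_le α))) (Finset.mem_univ 0)
    exact_mod_cast (show 2 ≤ ∏ α, n α from hn₁.trans this)
  set N : ℝ := ((∏ α, n α : ℕ) : ℝ)
  have hwitness := hsep.re_frobInner_le (E := Epsi hn v) fun A hA =>
    (Complex.re_le_norm _).trans (norm_frobInner_Epsi_prodMat_le hn hj₀ hA)
  rw [frobInner_add_right, frobInner_smul_right, frobInner_smul_right, frobInner_Epsi_self hn hv,
    frobInner_Epsi_one hn hv] at hwitness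
  simp only [mul_one, Complex.add_re, Complex.ofReal_re] at hwitness
  rw [lt_div_iff₀ (by linarith)] at hlam1
  have hcleared : (1 - lam) * N + lam ≤ ‖v j₀‖ ^ 2 * N := by
    have := mul_le_mul_of_nonneg_right hwitness (by linarith : (0 : ℝ) ≤ N)
    rwa [add_mul, div_mul_cancel₀ _ (by linarith)] at this
  linarith

/-- Assume moreover `|v j| < 1` for every `j`, and let
`|v j₀| = max_j |v j|`.  For every real `λ` with
`0 ≤ λ < (1 - |v j₀|²) ⬝ N/(N-1)`, where `N = ∏ α, n α`, the decohered state
`(1 - λ) E_ψ + (λ/N) I` is entangled. -/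
theorem decohered_Epsi_entangled {p : ℕ} {n : Fin (p + 2) → ℕ}
    (hn : Monotone n) (hn₁ : 2 ≤ n 0)
    (v : Fin (n 0) → ℂ) (hv : ∑ j, ‖v j‖ ^ 2 = 1) (hv1 : ∀ j, ‖v j‖ < 1)
    (j₀ : Fin (n 0)) (hj₀ : ∀ j, ‖v j‖ ≤ ‖v j₀‖)
    (lam : ℝ) (hlam0 : 0 ≤ lam)
    (hlam1 : lam < (1 - ‖v j₀‖ ^ 2) * ((∏ α, n α : ℕ) : ℝ) / (((∏ α, n α : ℕ) : ℝ) - 1)) :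
    ¬ IsSeparableState (((1 - lam : ℝ) : ℂ) • Epsi hn v +
      ((lam / ((∏ α, n α : ℕ) : ℝ) : ℝ) : ℂ) •
        (1 : Matrix (∀ α, Fin (n α)) (∀ α, Fin (n α)) ℂ)) :=
  decohered_Epsi_entangled_general hn hn₁ v hv j₀ hj₀ lam hlam1
end
end

section
/- Let 2 ≤ N₁ ≤ N₂ and N = N₁N₂, and let T be a separable state on ℂ^{N₁}⊗ℂ^{N₂}. If r > 0 is such that every Hermitian N×N matrix Y with trace 1 and ‖Y − T‖ ≤ r (Frobenius norm) is a separable state, then r ≤ (1/N₁)·√(N/(N−1)). -/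
open Matrix BigOperators ComplexOrder

noncomputable section

/-- The Kronecker product of two matrices, on the product basis. -/
def prodMat2 {m₁ m₂ : Type*} (A : Matrix m₁ m₁ ℂ) (B : Matrix m₂ m₂ ℂ) :
    Matrix (m₁ × m₂) (m₁ × m₂) ℂ :=
  fun j k => A j.1 k.1 * B j.2 k.2

/-- A pure product state on a bipartite system. -/
def IsPureProductState2 {m₁ m₂ : Type*} [Fintype m₁] [Fintype m₂]
    (M : Matrix (m₁ × m₂) (m₁ × m₂) ℂ) : Prop :=
  ∃ (A : Matrix m₁ m₁ ℂ) (B : Matrix m₂ m₂ ℂ),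
    IsPureState A ∧ IsPureState B ∧ M = prodMat2 A B

/-- A separable state on a bipartite system: a finite convex combination of
pure product states. -/
def IsSeparable2 {m₁ m₂ : Type*} [Fintype m₁] [Fintype m₂]
    (M : Matrix (m₁ × m₂) (m₁ × m₂) ℂ) : Prop :=
  ∃ (k : ℕ) (c : Fin k → ℝ) (P : Fin k → Matrix (m₁ × m₂) (m₁ × m₂) ℂ),
    (∀ i, 0 ≤ c i) ∧ (∑ i, c i) = 1 ∧ (∀ i, IsPureProductState2 (P i)) ∧
      M = ∑ i, (c i : ℂ) • P i

/-- The maximally entangled pure state on `ℂ^{N₁} ⊗ ℂ^{N₂}` (for `N₁ ≤ N₂`):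
`E = |ψ⟩⟨ψ|` with `ψ = (1/√N₁) ∑ j, e j ⊗ e j`. -/
def maxEnt (N₁ N₂ : ℕ) : Matrix (Fin N₁ × Fin N₂) (Fin N₁ × Fin N₂) ℂ :=
  fun x y =>
    (if (x.1 : ℕ) = (x.2 : ℕ) then (((Real.sqrt N₁ : ℝ) : ℂ))⁻¹ else 0) *
      star (if (y.1 : ℕ) = (y.2 : ℕ) then (((Real.sqrt N₁ : ℝ) : ℂ))⁻¹ else 0)

/-!
Let `E` be the maximally entangled state. On pure product states `A ⊗ B` one has
`Tr(E (A ⊗ B)) = Tr(A Cᵀ) / N₁ ∈ [0, 1/N₁]`, where `C` is the leading `N₁ × N₁` block of `B`,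
and by convexity the same holds on every separable state. The traceless Hermitian matrix
`Z = E - I/N` has `‖Z‖² = Tr(E Z) = 1 - 1/N`, so `Y = T + (r/‖Z‖) Z` is a Hermitian trace-one
matrix at distance `r` from `T` with `Tr(E Y) = Tr(E T) + r ‖Z‖ ≥ r √(1 - 1/N)`. Separability
of `Y` then gives `r √(1 - 1/N) ≤ 1/N₁`.
-/

open scoped Kronecker

lemma prodMat2_eq_kronecker {m₁ m₂ : Type*} (A : Matrix m₁ m₁ ℂ) (B : Matrix m₂ m₂ ℂ) :
    prodMat2 A B = A ⊗ₖ B :=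
  rfl

section States

variable {m : Type*} [Fintype m]

lemma IsPureState.posSemidef {A : Matrix m m ℂ} (hA : IsPureState A) : A.PosSemidef := by
  obtain ⟨hH, hI, -⟩ := hA
  simpa [hH.eq, hI] using posSemidef_conjTranspose_mul_self A

lemma convex_setOf_isState : Convex ℝ {M : Matrix m m ℂ | IsState M} := by
  rintro X ⟨hX, hXtr⟩ Y ⟨hY, hYtr⟩ a b ha hb hab
  refine ⟨(hX.smul ha).add (hY.smul hb), ?_⟩
  rw [trace_add, trace_smul, trace_smul, hXtr, hYtr, ← add_smul, hab, one_smul]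

end States

section Separable

variable {m₁ m₂ : Type*} [Fintype m₁] [Fintype m₂]

lemma IsPureProductState2.isState {M : Matrix (m₁ × m₂) (m₁ × m₂) ℂ}
    (hM : IsPureProductState2 M) : IsState M := by
  obtain ⟨A, B, hA, hB, rfl⟩ := hM
  refine ⟨hA.posSemidef.kronecker hB.posSemidef, ?_⟩
  rw [prodMat2_eq_kronecker, trace_kronecker, hA.2.2, hB.2.2, one_mul]

lemma IsSeparable2.mem_of_convex {S : Set (Matrix (m₁ × m₂) (m₁ × m₂) ℂ)} (hS : Convex ℝ S)
    (hpure : ∀ P, IsPureProductState2 P → P ∈ S) {M : Matrix (m₁ × m₂) (m₁ × m₂) ℂ}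
    (hM : IsSeparable2 M) : M ∈ S := by
  obtain ⟨k, c, P, hc, hc1, hP, rfl⟩ := hM
  simp_rw [Complex.coe_smul]
  exact hS.sum_mem (fun i _ => hc i) hc1 fun i _ => hpure _ (hP i)

lemma IsSeparable2.isState {M : Matrix (m₁ × m₂) (m₁ × m₂) ℂ} (hM : IsSeparable2 M) :
    IsState M :=
  hM.mem_of_convex convex_setOf_isState fun _ hP => hP.isState

end Separable

lemma convex_setOf_trace_mul_mem {m : Type*} [Fintype m] (W : Matrix m m ℂ) {s : Set ℂ}
    (hs : Convex ℝ s) : Convex ℝ {M : Matrix m m ℂ | (W * M).trace ∈ s} :=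
  hs.is_linear_preimage (f := fun M : Matrix m m ℂ => (W * M).trace)
    ⟨fun X Y => by rw [Matrix.mul_add, trace_add], fun c X => by rw [Matrix.mul_smul, trace_smul]⟩

lemma Matrix.PosSemidef.trace_submatrix_le {m n : Type*} [Fintype m] [Fintype n]
    {B : Matrix n n ℂ} (hB : B.PosSemidef) {e : m → n} (he : Function.Injective e) :
    (B.submatrix e e).trace ≤ B.trace := by
  have := Finset.sum_le_univ_sum_of_nonneg (s := Finset.univ.map ⟨e, he⟩)
    (f := fun i => B i i) fun i => hB.diag_nonneg
  simpa [trace] using this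

section Projection

variable {m : Type*} [Fintype m] {A C : Matrix m m ℂ}

lemma trace_idempotent_mul_nonneg (hA : A.IsHermitian) (hAA : A * A = A) (hC : C.PosSemidef) :
    0 ≤ (A * C).trace := by
  have : (A * C * Aᴴ).trace = (A * C).trace := by rw [trace_mul_cycle, hA.eq, hAA]
  exact this ▸ (hC.mul_mul_conjTranspose_same A).trace_nonneg

lemma trace_idempotent_mul_le [DecidableEq m] (hA : A.IsHermitian) (hAA : A * A = A)
    (hC : C.PosSemidef) : (A * C).trace ≤ C.trace := by
  have hA' : (1 - A).IsHermitian := isHermitian_one.sub hA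
  have hAA' : (1 - A) * (1 - A) = 1 - A := by simp [sub_mul, mul_sub, hAA]
  have := trace_idempotent_mul_nonneg hA' hAA' hC
  rwa [sub_mul, one_mul, trace_sub, sub_nonneg] at this

end Projection

section MaxEnt

variable {N₁ N₂ : ℕ}

def maxEntVec (N₁ N₂ : ℕ) : Fin N₁ × Fin N₂ → ℂ :=
  fun x => if (x.1 : ℕ) = (x.2 : ℕ) then (((Real.sqrt N₁ : ℝ) : ℂ))⁻¹ else 0

lemma maxEnt_eq_vecMulVec :
    maxEnt N₁ N₂ = vecMulVec (maxEntVec N₁ N₂) (star (maxEntVec N₁ N₂)) :=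
  rfl

lemma star_maxEntVec : star (maxEntVec N₁ N₂) = maxEntVec N₁ N₂ := by
  ext x
  simp [maxEntVec, apply_ite star, ← Complex.ofReal_inv]

lemma sum_maxEntVec_mul (h₁₂ : N₁ ≤ N₂) (f : Fin N₁ × Fin N₂ → ℂ) :
    ∑ x, maxEntVec N₁ N₂ x * f x
      = (((Real.sqrt N₁ : ℝ) : ℂ))⁻¹ * ∑ j, f (j, Fin.castLE h₁₂ j) := by
  rw [Fintype.sum_prod_type, Finset.mul_sum]
  refine Finset.sum_congr rfl fun j _ => ?_
  rw [Finset.sum_eq_single (Fin.castLE h₁₂ j)]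
  · simp [maxEntVec]
  · intro k _ hk
    simp only [maxEntVec, ite_mul, zero_mul, ite_eq_right_iff]
    exact fun h => absurd (Fin.ext h.symm) hk
  · simp

lemma inv_sqrt_mul_inv_sqrt (n : ℕ) :
    (((Real.sqrt n : ℝ) : ℂ))⁻¹ * (((Real.sqrt n : ℝ) : ℂ))⁻¹ = (n : ℂ)⁻¹ := by
  rw [← mul_inv, ← Complex.ofReal_mul, Real.mul_self_sqrt n.cast_nonneg, Complex.ofReal_natCast]

lemma maxEntVec_dotProduct_self (h₁₂ : N₁ ≤ N₂) (hN₁ : N₁ ≠ 0) :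
    maxEntVec N₁ N₂ ⬝ᵥ maxEntVec N₁ N₂ = 1 := by
  have hdiag : ∀ j : Fin N₁, maxEntVec N₁ N₂ (j, Fin.castLE h₁₂ j) = ((Real.sqrt N₁ : ℝ) : ℂ)⁻¹ :=
    fun j => by simp [maxEntVec]
  rw [dotProduct, sum_maxEntVec_mul h₁₂]
  simp only [hdiag, Finset.sum_const, Finset.card_univ, Fintype.card_fin, nsmul_eq_mul]
  rw [mul_left_comm, inv_sqrt_mul_inv_sqrt, mul_inv_cancel₀ (Nat.cast_ne_zero.mpr hN₁)]

lemma isPureState_maxEnt (h₁₂ : N₁ ≤ N₂) (hN₁ : N₁ ≠ 0) : IsPureState (maxEnt N₁ N₂) := by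
  have hψ := maxEntVec_dotProduct_self h₁₂ hN₁
  refine ⟨?_, ?_, ?_⟩
  · rw [maxEnt_eq_vecMulVec, IsHermitian, conjTranspose_vecMulVec, star_star]
  · rw [maxEnt_eq_vecMulVec, vecMulVec_mul_vecMulVec, star_maxEntVec, hψ, one_smul]
  · rw [maxEnt_eq_vecMulVec, trace_vecMulVec, star_maxEntVec, hψ]

lemma trace_maxEnt_mul (h₁₂ : N₁ ≤ N₂) (M : Matrix (Fin N₁ × Fin N₂) (Fin N₁ × Fin N₂) ℂ) :
    (maxEnt N₁ N₂ * M).trace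
      = (N₁ : ℂ)⁻¹ * ∑ j, ∑ k, M (k, Fin.castLE h₁₂ k) (j, Fin.castLE h₁₂ j) := by
  rw [maxEnt_eq_vecMulVec, star_maxEntVec, vecMulVec_mul, trace_vecMulVec]
  simp only [dotProduct, vecMul, sum_maxEntVec_mul h₁₂]
  rw [← Finset.mul_sum, ← mul_assoc, inv_sqrt_mul_inv_sqrt]

lemma trace_maxEnt_mul_prodMat2 (h₁₂ : N₁ ≤ N₂) (A : Matrix (Fin N₁) (Fin N₁) ℂ)
    (B : Matrix (Fin N₂) (Fin N₂) ℂ) :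
    (maxEnt N₁ N₂ * prodMat2 A B).trace
      = (N₁ : ℂ)⁻¹ * (A * (B.submatrix (Fin.castLE h₁₂) (Fin.castLE h₁₂))ᵀ).trace := by
  rw [trace_maxEnt_mul h₁₂, Finset.sum_comm]
  simp [prodMat2, trace, mul_apply]

end MaxEnt

lemma IsPureProductState2.trace_maxEnt_mul_mem_Icc {N₁ N₂ : ℕ} (h₁₂ : N₁ ≤ N₂)
    {P : Matrix (Fin N₁ × Fin N₂) (Fin N₁ × Fin N₂) ℂ} (hP : IsPureProductState2 P) :
    (maxEnt N₁ N₂ * P).trace ∈ Set.Icc 0 (N₁ : ℂ)⁻¹ := by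
  obtain ⟨A, B, hA, hB, rfl⟩ := hP
  rw [trace_maxEnt_mul_prodMat2 h₁₂]
  set C := (B.submatrix (Fin.castLE h₁₂) (Fin.castLE h₁₂))ᵀ
  have hC : C.PosSemidef := (hB.posSemidef.submatrix _).transpose
  have hCtr : C.trace ≤ 1 := by
    rw [trace_transpose, ← hB.2.2]
    exact hB.posSemidef.trace_submatrix_le (Fin.castLE_injective h₁₂)
  have hN₁ : (0 : ℂ) ≤ (N₁ : ℂ)⁻¹ := inv_nonneg.2 N₁.cast_nonneg
  exact ⟨mul_nonneg hN₁ (trace_idempotent_mul_nonneg hA.1 hA.2.1 hC),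
    mul_le_of_le_one_right hN₁ ((trace_idempotent_mul_le hA.1 hA.2.1 hC).trans hCtr)⟩

lemma IsSeparable2.trace_maxEnt_mul_mem_Icc {N₁ N₂ : ℕ} (h₁₂ : N₁ ≤ N₂)
    {M : Matrix (Fin N₁ × Fin N₂) (Fin N₁ × Fin N₂) ℂ} (hM : IsSeparable2 M) :
    (maxEnt N₁ N₂ * M).trace ∈ Set.Icc 0 (N₁ : ℂ)⁻¹ :=
  hM.mem_of_convex (convex_setOf_trace_mul_mem _ (convex_Icc _ _))
    fun _ hP => hP.trace_maxEnt_mul_mem_Icc h₁₂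

lemma frobNorm_ofReal_smul {m : Type*} [Fintype m] (c : ℝ) (A : Matrix m m ℂ) :
    frobNorm ((c : ℂ) • A) = |c| * frobNorm A := by
  have : frobInner ((c : ℂ) • A) ((c : ℂ) • A) = ((c * c : ℝ) : ℂ) * frobInner A A := by
    rw [frobInner, frobInner, conjTranspose_smul, Matrix.smul_mul, Matrix.mul_smul, smul_smul,
      trace_smul, Complex.star_def, Complex.conj_ofReal, smul_eq_mul, Complex.ofReal_mul]
  rw [frobNorm, frobNorm, this, Complex.re_ofReal_mul, Real.sqrt_mul (mul_self_nonneg c),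
    Real.sqrt_mul_self_eq_abs]

def maxMixed (m : Type*) [Fintype m] [DecidableEq m] : Matrix m m ℂ :=
  (Fintype.card m : ℂ)⁻¹ • 1

section MaxMixed

variable {m : Type*} [Fintype m] [DecidableEq m]

lemma maxMixed_isHermitian : (maxMixed m).IsHermitian := by
  simp [maxMixed, IsHermitian, conjTranspose_smul]

lemma trace_maxMixed [Nonempty m] : (maxMixed m).trace = 1 := by
  simp [maxMixed, Fintype.card_ne_zero]

variable {E : Matrix m m ℂ}

lemma IsPureState.trace_mul_sub_maxMixed (hE : IsPureState E) :
    (E * (E - maxMixed m)).trace = 1 - (Fintype.card m : ℂ)⁻¹ := by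
  rw [Matrix.mul_sub, trace_sub, hE.2.1, hE.2.2, maxMixed, Matrix.mul_smul, Matrix.mul_one,
    trace_smul, hE.2.2, smul_eq_mul, mul_one]

lemma IsPureState.frobNorm_sub_maxMixed [Nonempty m] (hE : IsPureState E) :
    frobNorm (E - maxMixed m) = Real.sqrt (1 - (Fintype.card m : ℝ)⁻¹) := by
  have hZ : (E - maxMixed m).IsHermitian := hE.1.sub maxMixed_isHermitian
  have htr : (E - maxMixed m).trace = 0 := by rw [trace_sub, hE.2.2, trace_maxMixed, sub_self]
  have hmix : (maxMixed m * (E - maxMixed m)).trace = 0 := by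
    rw [maxMixed, Matrix.smul_mul, Matrix.one_mul, trace_smul, ← maxMixed, htr, smul_zero]
  have hinner : frobInner (E - maxMixed m) (E - maxMixed m)
      = ((1 - (Fintype.card m : ℝ)⁻¹ : ℝ) : ℂ) := by
    rw [frobInner, hZ.eq, Matrix.sub_mul, trace_sub, hE.trace_mul_sub_maxMixed, hmix, sub_zero]
    push_cast
    rfl
  rw [frobNorm, hinner, Complex.ofReal_re]

lemma IsPureState.trace_mul_add_radius_le [Nonempty m] {T : Matrix m m ℂ} (hE : IsPureState E)
    (hT : IsState T) {r : ℝ} (hr : 0 ≤ r) {β : ℂ}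
    (hball : ∀ Y : Matrix m m ℂ, Y.IsHermitian → Y.trace = 1 → frobNorm (Y - T) ≤ r →
      (E * Y).trace ≤ β) :
    (E * T).trace + ((r * Real.sqrt (1 - (Fintype.card m : ℝ)⁻¹) : ℝ) : ℂ) ≤ β := by
  set s := Real.sqrt (1 - (Fintype.card m : ℝ)⁻¹)
  have hs2 : ((s ^ 2 : ℝ) : ℂ) = 1 - (Fintype.card m : ℂ)⁻¹ := by
    rw [Real.sq_sqrt (sub_nonneg.2 (inv_le_one_of_one_le₀ (by simp [Nat.one_le_iff_ne_zero])))]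
    push_cast
    rfl
  set Z := E - maxMixed m
  have hEY : (E * (T + ((r / s : ℝ) : ℂ) • Z)).trace = (E * T).trace + ((r * s : ℝ) : ℂ) := by
    rw [Matrix.mul_add, trace_add, Matrix.mul_smul, trace_smul, hE.trace_mul_sub_maxMixed, ← hs2,
      smul_eq_mul, ← Complex.ofReal_mul]
    rcases eq_or_ne s 0 with hs | hs
    · simp [hs]
    · congr 2
      field_simp
  refine hEY ▸ hball _ ?_ ?_ ?_
  · exact hT.1.isHermitian.add ((hE.1.sub maxMixed_isHermitian).smul (Complex.conj_ofReal _))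
  · rw [trace_add, trace_smul, trace_sub, hE.2.2, trace_maxMixed, sub_self, smul_zero, add_zero,
      hT.2]
  · rw [add_sub_cancel_left, frobNorm_ofReal_smul, hE.frobNorm_sub_maxMixed, abs_div,
      abs_of_nonneg hr, abs_of_nonneg (Real.sqrt_nonneg _)]
    change r / s * s ≤ r
    rcases eq_or_ne s 0 with hs | hs
    · simp [hs, hr]
    · rw [div_mul_cancel₀ _ hs]

end MaxMixed

lemma sqrt_div_sub_one_eq_inv_sqrt_one_sub_inv {x : ℝ} (hx : 1 < x) :
    Real.sqrt (x / (x - 1)) = (Real.sqrt (1 - x⁻¹))⁻¹ := by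
  rw [← Real.sqrt_inv]
  congr 1
  field_simp

/-- Let `2 ≤ N₁ ≤ N₂`, `N = N₁ N₂`, and let `T` be a separable state on
`ℂ^{N₁} ⊗ ℂ^{N₂}`.  If `r > 0` is such that every Hermitian trace-one matrix `Y` with
`‖Y - T‖ ≤ r` is a separable state, then `r ≤ (1/N₁) ⬝ √(N/(N-1))`. -/
theorem separable_ball_radius_le {N₁ N₂ : ℕ} (h₁ : 2 ≤ N₁) (h₁₂ : N₁ ≤ N₂)
    (T : Matrix (Fin N₁ × Fin N₂) (Fin N₁ × Fin N₂) ℂ) (hT : IsSeparable2 T)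
    (r : ℝ) (hr : 0 < r)
    (hball : ∀ Y : Matrix (Fin N₁ × Fin N₂) (Fin N₁ × Fin N₂) ℂ,
      Y.IsHermitian → Y.trace = 1 → frobNorm (Y - T) ≤ r → IsSeparable2 Y) :
    r ≤ ((N₁ : ℝ))⁻¹ * Real.sqrt (((N₁ * N₂ : ℕ) : ℝ) / (((N₁ * N₂ : ℕ) : ℝ) - 1)) := by
  have : Nonempty (Fin N₁ × Fin N₂) := ⟨(⟨0, by omega⟩, ⟨0, by omega⟩)⟩
  have hN : (1 : ℝ) < (N₁ * N₂ : ℕ) := by norm_cast; nlinarith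
  have hbound := (isPureState_maxEnt h₁₂ (by omega)).trace_mul_add_radius_le hT.isState hr.le
    fun Y hY htr hdist => ((hball Y hY htr hdist).trace_maxEnt_mul_mem_Icc h₁₂).2
  have hT₀ := (hT.trace_maxEnt_mul_mem_Icc h₁₂).1
  rw [Fintype.card_prod, Fintype.card_fin, Fintype.card_fin] at hbound
  have hrs : r * Real.sqrt (1 - ((N₁ * N₂ : ℕ) : ℝ)⁻¹) ≤ (N₁ : ℝ)⁻¹ :=
    Complex.real_le_real.1 (by simpa using (le_add_of_nonneg_left hT₀).trans hbound)
  rw [sqrt_div_sub_one_eq_inv_sqrt_one_sub_inv hN,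
    le_mul_inv_iff₀ (Real.sqrt_pos.2 (sub_pos.2 (inv_lt_one_of_one_lt₀ hN)))]
  exact hrs
end
end
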